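/- Let T > 0, let A : [0,T] → Mₙ(ℝ) and B : [0,T] → M_{n×k}(ℝ) be continuous, and let Φ : [0,T] → Mₙ(ℝ) be differentiable with Φ(0) = I, Φ'(t) = A(t) Φ(t) for all t ∈ [0,T], and Φ(t) invertible for every t ∈ [0,T]; write Γ(s,t) := Φ(t) Φ(s)⁻¹. Let ℓ : [0,T] → ℝⁿ, m : [0,T] → ℝᵏ, and v : [0,T] → ℝᵏ be continuous, and let δ : [0,T] → ℝⁿ be differentiable with δ(0) = 0 and δ'(t) = A(t) δ(t) + B(t) v(t) for all t ∈ [0,T]. Then ∫₀ᵀ ( ⟨ℓ(t), δ(t)⟩ + ⟨m(t), v(t)⟩ ) dt = ∫₀ᵀ ⟨ B(s)ᵀ ( ∫ₛᵀ Γ(s,t)ᵀ ℓ(t) dt ) + m(s), v(s) ⟩ ds. -/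

import Mathlib

open scoped Matrix

attribute [local instance] Matrix.normedAddCommGroup Matrix.normedSpace

/-!
Variation of constants: `t ↦ Φ(t) ∫₀ᵗ Φ(s)⁻¹ B(s) v(s) ds` solves the same linear ODE as `δ` with
the same initial value, so by uniqueness of solutions of linear ODEs with continuous coefficients
it equals `δ`. Then `⟨ℓ(t), δ(t)⟩ = ⟨Φ(t)ᵀ ℓ(t), ∫₀ᵗ Φ(s)⁻¹ B(s) v(s) ds⟩`, and an integration by
parts (exchanging the order of integration over the triangle `0 ≤ s ≤ t ≤ T`) moves the inner
integral onto `ℓ`, which produces the kernel `∫ₛᵀ Γ(s,t)ᵀ ℓ(t) dt`.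
-/

open Set MeasureTheory intervalIntegral Topology

section MatrixCalculus

variable {X ι κ : Type*} [Fintype κ]

theorem ContinuousOn.dotProduct [TopologicalSpace X] {u v : X → κ → ℝ} {s : Set X}
    (hu : ContinuousOn u s) (hv : ContinuousOn v s) : ContinuousOn (fun x => u x ⬝ᵥ v x) s :=
  (continuous_fst.dotProduct continuous_snd).comp_continuousOn (hu.prodMk hv)

theorem ContinuousOn.matrix_mulVec [TopologicalSpace X] {M : X → Matrix ι κ ℝ} {v : X → κ → ℝ}
    {s : Set X} (hM : ContinuousOn M s) (hv : ContinuousOn v s) :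
    ContinuousOn (fun x => M x *ᵥ v x) s :=
  (continuous_fst.matrix_mulVec continuous_snd).comp_continuousOn (hM.prodMk hv)

theorem ContinuousOn.matrix_inv [TopologicalSpace X] [DecidableEq κ] {M : X → Matrix κ κ ℝ}
    {s : Set X} (hM : ContinuousOn M s) (hunit : ∀ x ∈ s, IsUnit (M x)) :
    ContinuousOn (fun x => (M x)⁻¹) s := fun x hx => by
  have hdet : (M x).det ≠ 0 := ((Matrix.isUnit_iff_isUnit_det _).1 (hunit x hx)).ne_zero
  refine (continuousAt_matrix_inv _ ?_).comp_continuousWithinAt (hM x hx)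
  rw [Ring.inverse_eq_inv']
  exact continuousAt_inv₀ hdet

theorem HasDerivWithinAt.dotProduct {u v : ℝ → κ → ℝ} {u' v' : κ → ℝ} {s : Set ℝ} {t : ℝ}
    (hu : HasDerivWithinAt u u' s t) (hv : HasDerivWithinAt v v' s t) :
    HasDerivWithinAt (fun x => u x ⬝ᵥ v x) (u' ⬝ᵥ v t + u t ⬝ᵥ v') s t := by
  have h := HasDerivWithinAt.fun_sum (u := Finset.univ) fun j _ =>
    (hasDerivWithinAt_pi.1 hu j).fun_mul (hasDerivWithinAt_pi.1 hv j)
  rw [Finset.sum_add_distrib] at h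
  exact h

theorem HasDerivWithinAt.matrix_mulVec {M : ℝ → Matrix ι κ ℝ} {M' : Matrix ι κ ℝ}
    {v : ℝ → κ → ℝ} {v' : κ → ℝ} {s : Set ℝ} {t : ℝ}
    (hM : HasDerivWithinAt M M' s t) (hv : HasDerivWithinAt v v' s t) :
    HasDerivWithinAt (fun x => M x *ᵥ v x) (M' *ᵥ v t + M t *ᵥ v') s t :=
  hasDerivWithinAt_pi.2 fun i => (hasDerivWithinAt_pi.1 hM i).dotProduct hv

theorem Matrix.norm_mulVec_le [Fintype ι] (M : Matrix ι κ ℝ) (v : κ → ℝ) :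
    ‖M *ᵥ v‖ ≤ Fintype.card κ * ‖M‖ * ‖v‖ := by
  refine (pi_norm_le_iff_of_nonneg (by positivity)).2 fun i => ?_
  calc ‖(M *ᵥ v) i‖ ≤ ∑ j, ‖M i j‖ * ‖v j‖ := by
        simpa only [Matrix.mulVec, dotProduct, norm_mul] using
          norm_sum_le Finset.univ fun j => M i j * v j
    _ ≤ ∑ _j : κ, ‖M‖ * ‖v‖ := by
        gcongr with j
        exacts [M.norm_entry_le_entrywise_sup_norm, norm_le_pi_norm v j]
    _ = Fintype.card κ * ‖M‖ * ‖v‖ := by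
        rw [Finset.sum_const, Finset.card_univ, nsmul_eq_mul, mul_assoc]

theorem Matrix.intervalIntegral_mulVec [Fintype ι] (M : Matrix ι κ ℝ) {f : ℝ → κ → ℝ} {a b : ℝ}
    (hf : IntervalIntegrable f volume a b) :
    ∫ x in a..b, M *ᵥ f x = M *ᵥ ∫ x in a..b, f x :=
  (Matrix.mulVecLin M).toContinuousLinearMap.intervalIntegral_comp_comm hf

end MatrixCalculus

section Primitive

variable {E : Type*} [NormedAddCommGroup E] [NormedSpace ℝ E] [CompleteSpace E]
  {f : ℝ → E} {a b t : ℝ}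

theorem ContinuousOn.hasDerivWithinAt_integral_right (hf : ContinuousOn f (Icc a b))
    (ht : t ∈ Icc a b) :
    HasDerivWithinAt (fun u => ∫ x in a..u, f x) (f t) (Icc a b) t :=
  have : Fact (t ∈ Icc a b) := ⟨ht⟩
  integral_hasDerivWithinAt_right
    ((hf.mono (Icc_subset_Icc_right ht.2)).intervalIntegrable_of_Icc ht.1)
    (hf.stronglyMeasurableAtFilter_nhdsWithin measurableSet_Icc t) (hf t ht)

theorem ContinuousOn.hasDerivWithinAt_integral_left (hf : ContinuousOn f (Icc a b))
    (ht : t ∈ Icc a b) :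
    HasDerivWithinAt (fun u => ∫ x in u..b, f x) (-f t) (Icc a b) t :=
  have : Fact (t ∈ Icc a b) := ⟨ht⟩
  integral_hasDerivWithinAt_left
    ((hf.mono (Icc_subset_Icc_left ht.1)).intervalIntegrable_of_Icc ht.2)
    (hf.stronglyMeasurableAtFilter_nhdsWithin measurableSet_Icc t) (hf t ht)

end Primitive

section LinearODE

variable {ι : Type*} [Fintype ι] {a b : ℝ}

theorem eqOn_Icc_of_hasDerivWithinAt_linear {A : ℝ → Matrix ι ι ℝ} {f x y : ℝ → ι → ℝ}
    (hA : ContinuousOn A (Icc a b))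
    (hx : ∀ t ∈ Icc a b, HasDerivWithinAt x (A t *ᵥ x t + f t) (Icc a b) t)
    (hy : ∀ t ∈ Icc a b, HasDerivWithinAt y (A t *ᵥ y t + f t) (Icc a b) t)
    (ha : x a = y a) : EqOn x y (Icc a b) := by
  obtain ⟨C, hC⟩ := isCompact_Icc.exists_bound_of_continuousOn hA
  have hlip : ∀ t ∈ Ico a b, LipschitzOnWith (Fintype.card ι * C).toNNReal
      (fun z => A t *ᵥ z + f t) univ := fun t ht =>
    (LipschitzWith.of_dist_le_mul fun z w => by
      rw [dist_eq_norm, dist_eq_norm, add_sub_add_right_eq_sub, ← Matrix.mulVec_sub]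
      refine (Matrix.norm_mulVec_le _ _).trans (mul_le_mul_of_nonneg_right ?_ (norm_nonneg _))
      exact (mul_le_mul_of_nonneg_left (hC t (Ico_subset_Icc_self ht)) (Nat.cast_nonneg _)).trans
        (Real.le_coe_toNNReal _)).lipschitzOnWith
  have hIci : ∀ t ∈ Ico a b, Icc a b ∈ 𝓝[≥] t := fun t ht => Icc_mem_nhdsGE_of_mem ht
  exact ODE_solution_unique_of_mem_Icc_right hlip
    (fun t ht => (hx t ht).continuousWithinAt)
    (fun t ht => (hx t (Ico_subset_Icc_self ht)).mono_of_mem_nhdsWithin (hIci t ht))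
    (fun _ _ => mem_univ _)
    (fun t ht => (hy t ht).continuousWithinAt)
    (fun t ht => (hy t (Ico_subset_Icc_self ht)).mono_of_mem_nhdsWithin (hIci t ht))
    (fun _ _ => mem_univ _) ha

variable [DecidableEq ι]

theorem eqOn_duhamel_of_hasDerivWithinAt {A Φ : ℝ → Matrix ι ι ℝ} {f x : ℝ → ι → ℝ}
    (hA : ContinuousOn A (Icc a b))
    (hΦ : ∀ t ∈ Icc a b, HasDerivWithinAt Φ (A t * Φ t) (Icc a b) t)
    (hΦinv : ∀ t ∈ Icc a b, IsUnit (Φ t)) (hf : ContinuousOn f (Icc a b))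
    (hx : ∀ t ∈ Icc a b, HasDerivWithinAt x (A t *ᵥ x t + f t) (Icc a b) t) (ha : x a = 0) :
    EqOn x (fun t => Φ t *ᵥ ∫ s in a..t, (Φ s)⁻¹ *ᵥ f s) (Icc a b) := by
  have hg : ContinuousOn (fun s => (Φ s)⁻¹ *ᵥ f s) (Icc a b) :=
    (ContinuousOn.matrix_inv (fun t ht => (hΦ t ht).continuousWithinAt) hΦinv).matrix_mulVec hf
  refine eqOn_Icc_of_hasDerivWithinAt_linear hA hx (fun t ht => ?_) (by simp [ha])
  have hΦΦinv : Φ t * (Φ t)⁻¹ = 1 :=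
    Matrix.mul_nonsing_inv _ ((Matrix.isUnit_iff_isUnit_det _).1 (hΦinv t ht))
  convert (hΦ t ht).matrix_mulVec (hg.hasDerivWithinAt_integral_right ht) using 1
  rw [Matrix.mulVec_mulVec, ← Matrix.mulVec_mulVec, Matrix.mulVec_mulVec (f t), hΦΦinv,
    Matrix.one_mulVec]

end LinearODE

theorem integral_dotProduct_integral_eq {ι : Type*} [Fintype ι] {g h : ℝ → ι → ℝ} {a b : ℝ}
    (hab : a ≤ b) (hg : ContinuousOn g (Icc a b)) (hh : ContinuousOn h (Icc a b)) :
    ∫ t in a..b, g t ⬝ᵥ ∫ s in a..t, h s = ∫ s in a..b, (∫ t in s..b, g t) ⬝ᵥ h s := by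
  set G := fun s => ∫ t in s..b, g t
  set H := fun t => ∫ s in a..t, h s
  have hG : ContinuousOn G (Icc a b) := fun s hs =>
    (hg.hasDerivWithinAt_integral_left hs).continuousWithinAt
  have hH : ContinuousOn H (Icc a b) := fun s hs =>
    (hh.hasDerivWithinAt_integral_right hs).continuousWithinAt
  have hGH : ∀ s ∈ Icc a b, HasDerivWithinAt (fun s => G s ⬝ᵥ H s)
      (G s ⬝ᵥ h s - g s ⬝ᵥ H s) (Icc a b) s := fun s hs => by
    simpa only [neg_dotProduct, neg_add_eq_sub] using
      (hg.hasDerivWithinAt_integral_left hs).dotProduct (hh.hasDerivWithinAt_integral_right hs)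
  have hgH := (hg.dotProduct hH).intervalIntegrable_of_Icc (μ := volume) hab
  have hGh := (hG.dotProduct hh).intervalIntegrable_of_Icc (μ := volume) hab
  have hzero := integral_eq_sub_of_hasDeriv_right_of_le hab
    (fun s hs => (hGH s hs).continuousWithinAt)
    (fun s hs => ((hGH s (Ioo_subset_Icc_self hs)).hasDerivAt
      (Icc_mem_nhds hs.1 hs.2)).hasDerivWithinAt)
    (hGh.sub hgH)
  rw [integral_sub hGh hgH] at hzero
  simp only [G, H, integral_same, zero_dotProduct, dotProduct_zero, sub_zero] at hzero
  linarith

theorem transpose_mulVec_integral_dotProduct_eq {ι κ : Type*} [Fintype ι] [Fintype κ]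
    {Φ : ℝ → Matrix ι ι ℝ} {ℓ : ℝ → ι → ℝ} {a b : ℝ} (P : Matrix ι ι ℝ) (B : Matrix ι κ ℝ)
    (v : κ → ℝ) (hint : IntervalIntegrable (fun t => (Φ t)ᵀ *ᵥ ℓ t) volume a b) :
    (Bᵀ *ᵥ ∫ t in a..b, (Φ t * P)ᵀ *ᵥ ℓ t) ⬝ᵥ v =
      (∫ t in a..b, (Φ t)ᵀ *ᵥ ℓ t) ⬝ᵥ (P *ᵥ (B *ᵥ v)) := by
  simp only [Matrix.transpose_mul, ← Matrix.mulVec_mulVec]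
  rw [Matrix.intervalIntegral_mulVec _ hint, Matrix.mulVec_mulVec, ← Matrix.transpose_mul,
    Matrix.mulVec_transpose, ← Matrix.dotProduct_mulVec, ← Matrix.mulVec_mulVec]

theorem first_variation_kernel_vector_general
    (T : ℝ) (hT : 0 < T) {n k : ℕ}
    (A : ℝ → Matrix (Fin n) (Fin n) ℝ) (hA : ContinuousOn A (Set.Icc 0 T))
    (B : ℝ → Matrix (Fin n) (Fin k) ℝ) (hB : ContinuousOn B (Set.Icc 0 T))
    (Φ : ℝ → Matrix (Fin n) (Fin n) ℝ)
    (hΦ : ∀ t ∈ Set.Icc (0 : ℝ) T,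
      HasDerivWithinAt Φ (A t * Φ t) (Set.Icc 0 T) t)
    (hΦinv : ∀ t ∈ Set.Icc (0 : ℝ) T, IsUnit (Φ t))
    (ℓ : ℝ → Fin n → ℝ) (hℓ : ContinuousOn ℓ (Set.Icc 0 T))
    (m : ℝ → Fin k → ℝ) (hm : ContinuousOn m (Set.Icc 0 T))
    (v : ℝ → Fin k → ℝ) (hv : ContinuousOn v (Set.Icc 0 T))
    (δ : ℝ → Fin n → ℝ)
    (hδ0 : δ 0 = 0)
    (hδ : ∀ t ∈ Set.Icc (0 : ℝ) T,
      HasDerivWithinAt δ (A t *ᵥ δ t + B t *ᵥ v t) (Set.Icc 0 T) t) :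
    ∫ t in (0 : ℝ)..T, (ℓ t ⬝ᵥ δ t + m t ⬝ᵥ v t) =
      ∫ s in (0 : ℝ)..T,
        ((B s)ᵀ *ᵥ (∫ t in s..T, (Φ t * (Φ s)⁻¹)ᵀ *ᵥ ℓ t) + m s) ⬝ᵥ v s := by
  have hΦc : ContinuousOn Φ (Icc 0 T) := fun t ht => (hΦ t ht).continuousWithinAt
  set g := fun t => (Φ t)ᵀ *ᵥ ℓ t
  set h := fun s => (Φ s)⁻¹ *ᵥ (B s *ᵥ v s)
  have hg : ContinuousOn g (Icc 0 T) :=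
    (continuous_id.matrix_transpose.comp_continuousOn hΦc).matrix_mulVec hℓ
  have hh : ContinuousOn h (Icc 0 T) := (hΦc.matrix_inv hΦinv).matrix_mulVec (hB.matrix_mulVec hv)
  have hδ_eq := eqOn_duhamel_of_hasDerivWithinAt hA hΦ hΦinv (hB.matrix_mulVec hv) hδ hδ0
  have hG : ContinuousOn (fun s => ∫ t in s..T, g t) (Icc 0 T) := fun s hs =>
    (hg.hasDerivWithinAt_integral_left hs).continuousWithinAt
  calc ∫ t in (0 : ℝ)..T, (ℓ t ⬝ᵥ δ t + m t ⬝ᵥ v t)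
      = (∫ t in (0 : ℝ)..T, ℓ t ⬝ᵥ δ t) + ∫ t in (0 : ℝ)..T, m t ⬝ᵥ v t :=
        integral_add
          ((hℓ.dotProduct fun t ht => (hδ t ht).continuousWithinAt).intervalIntegrable_of_Icc
            hT.le)
          ((hm.dotProduct hv).intervalIntegrable_of_Icc hT.le)
    _ = (∫ t in (0 : ℝ)..T, g t ⬝ᵥ ∫ s in 0..t, h s) + ∫ t in (0 : ℝ)..T, m t ⬝ᵥ v t := by
        congr 1
        refine integral_congr fun t ht => ?_
        rw [hδ_eq (uIcc_of_le hT.le ▸ ht), Matrix.dotProduct_mulVec, ← Matrix.mulVec_transpose]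
    _ = ∫ s in (0 : ℝ)..T, ((∫ t in s..T, g t) ⬝ᵥ h s + m s ⬝ᵥ v s) := by
        rw [integral_dotProduct_integral_eq hT.le hg hh, integral_add
          ((hG.dotProduct hh).intervalIntegrable_of_Icc hT.le)
          ((hm.dotProduct hv).intervalIntegrable_of_Icc hT.le)]
    _ = _ := integral_congr fun s hs => by
        rw [uIcc_of_le hT.le] at hs
        rw [add_dotProduct, transpose_mulVec_integral_dotProduct_eq _ _ _
          ((hg.mono (Icc_subset_Icc_left hs.1)).intervalIntegrable_of_Icc hs.2)]

/-- Deterministic core of the paper's Theorem 2: if `Φ` is the invertible fundamental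
solution of `Φ' = A Φ`, `Γ(s,t) := Φ(t) Φ(s)⁻¹`, and `δ` solves
`δ'(t) = A(t) δ(t) + B(t) v(t)`, `δ(0) = 0`, on `[0,T]`, then
`∫₀ᵀ (⟨ℓ(t), δ(t)⟩ + ⟨m(t), v(t)⟩) dt
  = ∫₀ᵀ ⟨ B(s)ᵀ (∫ₛᵀ Γ(s,t)ᵀ ℓ(t) dt) + m(s), v(s) ⟩ ds`. -/
theorem first_variation_kernel_vector
    (T : ℝ) (hT : 0 < T) {n k : ℕ}
    (A : ℝ → Matrix (Fin n) (Fin n) ℝ) (hA : ContinuousOn A (Set.Icc 0 T))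
    (B : ℝ → Matrix (Fin n) (Fin k) ℝ) (hB : ContinuousOn B (Set.Icc 0 T))
    (Φ : ℝ → Matrix (Fin n) (Fin n) ℝ)
    (hΦ0 : Φ 0 = 1)
    (hΦ : ∀ t ∈ Set.Icc (0 : ℝ) T,
      HasDerivWithinAt Φ (A t * Φ t) (Set.Icc 0 T) t)
    (hΦinv : ∀ t ∈ Set.Icc (0 : ℝ) T, IsUnit (Φ t))
    (ℓ : ℝ → Fin n → ℝ) (hℓ : ContinuousOn ℓ (Set.Icc 0 T))
    (m : ℝ → Fin k → ℝ) (hm : ContinuousOn m (Set.Icc 0 T))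
    (v : ℝ → Fin k → ℝ) (hv : ContinuousOn v (Set.Icc 0 T))
    (δ : ℝ → Fin n → ℝ)
    (hδ0 : δ 0 = 0)
    (hδ : ∀ t ∈ Set.Icc (0 : ℝ) T,
      HasDerivWithinAt δ (A t *ᵥ δ t + B t *ᵥ v t) (Set.Icc 0 T) t) :
    ∫ t in (0 : ℝ)..T, (ℓ t ⬝ᵥ δ t + m t ⬝ᵥ v t) =
      ∫ s in (0 : ℝ)..T,
        ((B s)ᵀ *ᵥ (∫ t in s..T, (Φ t * (Φ s)⁻¹)ᵀ *ᵥ ℓ t) + m s) ⬝ᵥ v s :=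
  first_variation_kernel_vector_general T hT A hA B hB Φ hΦ hΦinv ℓ hℓ m hm v hv δ hδ0 hδ
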